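/- Let d ≥ 2 and let A_0,…,A_{k+1} be a sequence of well-folded hyperorthogonal curves constructed by inflation, where σ_{k,i} is the signed permutation with C_{k,i} = σ_{k,i}(G(d)) modulo translation. Then for every axis a ∈ {1,…,d} and every vertex v_i of A_k, depth(σ_{k,i}, a) ≤ edgedist(A_k, v_i, a). -/

import Mathlib

open MeasureTheory

/-! ## Basic objects: points of `ℤ^d` (indexed by coordinates `1,…,d`), directions,
Gray codes, curves on the grid, inflation, well-foldedness, hyperorthogonality. -/

/-- A point of the grid `ℤ^d`; only coordinates `1,…,d` are meaningful
(coordinate `0` and coordinates `> d` are kept equal to `0`). -/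
abbrev Pt : Type := ℕ → ℤ

def ptZero : Pt := fun _ => 0

/-- `flipped i = 1` if `i < 0`, and `0` otherwise. -/
def flipped (i : ℤ) : ℤ := if i < 0 then 1 else 0

/-- Reversal of a free curve (sequence of directions): reverse the order and
negate every direction. -/
def grayRev (l : List ℤ) : List ℤ := (l.map (fun x => -x)).reverse

/-- The Gray-code free curve `G(d)`: `G(0)` is empty and `G(d)` is the
concatenation of `G(d-1)`, the single direction `d`, and the reverse of `G(d-1)`. -/
def G : ℕ → List ℤ
  | 0 => []
  | d + 1 => G d ++ [((d : ℤ) + 1)] ++ grayRev (G d)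

/-- Moving a point one step in direction `e`: coordinate `|e|` changes by `sgn e`. -/
def move (v : Pt) (e : ℤ) : Pt := fun j => if j = e.natAbs then v j + e.sign else v j

/-- The vertices of the path starting at `start` whose successive edge
directions are given by `dirs`. -/
def pathVertices (start : Pt) (dirs : List ℤ) : List Pt := dirs.scanl move start

/-- `e` is a valid direction in `d` dimensions: `e ∈ {−d,…,−1,1,…,d}`. -/
def IsDir (d : ℕ) (e : ℤ) : Prop := e ≠ 0 ∧ e.natAbs ≤ d

/-- The (ordered) pair `(v,w)` is an edge with direction `e`. -/
def HasDir (d : ℕ) (v w : Pt) (e : ℤ) : Prop := IsDir d e ∧ w = move v e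

/-- `(v,w)` is an edge of the grid. -/
def IsEdge (d : ℕ) (v w : Pt) : Prop := ∃ e, HasDir d v w e

/-- A curve on the grid: a finite sequence of distinct points in which each pair of
consecutive points differs by `±1` in exactly one coordinate. -/
def IsGridCurve (d : ℕ) (c : List Pt) : Prop := c.Nodup ∧ c.Chain' (IsEdge d)

/-- Membership in the cube `{0,…,2^k−1}^d` (unused coordinates are `0`). -/
def InCube (d k : ℕ) (v : Pt) : Prop :=
  (∀ j, 1 ≤ j → j ≤ d → 0 ≤ v j ∧ v j < 2 ^ k) ∧ (∀ j, j = 0 ∨ d < j → v j = 0)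

/-- A `k`-curve: a Hamiltonian path on the grid `{0,…,2^k−1}^d`. -/
def IsKCurve (d k : ℕ) (c : List Pt) : Prop :=
  IsGridCurve d c ∧ ∀ v : Pt, v ∈ c ↔ InCube d k v

/-- A signed permutation of `{−d,…,−1,1,…,d}`: a bijection `σ` of this set
with `σ(−k) = −σ(k)` (bundled with its inverse). -/
structure SignedPerm (d : ℕ) where
  f : ℤ → ℤ
  inv : ℤ → ℤ
  maps : ∀ i : ℤ, IsDir d i → IsDir d (f i)
  maps_inv : ∀ i : ℤ, IsDir d i → IsDir d (inv i)
  neg : ∀ i : ℤ, f (-i) = -f i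
  neg_inv : ∀ i : ℤ, inv (-i) = -inv i
  left_inv : ∀ i : ℤ, IsDir d i → inv (f i) = i
  right_inv : ∀ i : ℤ, IsDir d i → f (inv i) = i

/-- The 1-curve `σ(G(d))` (an isometric image of the Gray-code curve) placed in the
cube `2·v + {0,1}^d`; its entry corner is forced to be
`2·v + (flipped(σ⁻¹(1)),…,flipped(σ⁻¹(d)))`. -/
def grayPiece (d : ℕ) (σ : SignedPerm d) (v : Pt) : List Pt :=
  pathVertices (fun j => 2 * v j + if 1 ≤ j ∧ j ≤ d then flipped (σ.inv (j : ℤ)) else 0)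
    ((G d).map σ.f)

/-- `B` is obtained from `A` by (well-folded) inflation: each vertex of `A` is
replaced by an isometric image of `G(d)` in the corresponding subcube, and the
result is a valid curve on the grid. (Reversed images of `G(d)` are themselves
images of `G(d)` under another signed permutation, so no generality is lost.) -/
def IsInflationWF (d : ℕ) (A B : List Pt) : Prop :=
  ∃ σ : ℕ → SignedPerm d,
    B = ((List.range A.length).map (fun i => grayPiece d (σ i) (A.getD i ptZero))).flatten ∧
    IsGridCurve d B

/-- A curve is well-folded if it is a single vertex or is obtained by inflation from a
well-folded curve, every inserted 1-curve being an isometric image of `G(d)`. -/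
inductive WellFolded (d : ℕ) : List Pt → Prop
  | single (v : Pt) : WellFolded d [v]
  | inflate {A B : List Pt} : WellFolded d A → IsInflationWF d A B → WellFolded d B

/-- The set of axes in which `v` and `w` differ (for a grid edge this is the
singleton of its axis). -/
def axesOfEdge (d : ℕ) (v w : Pt) : Finset ℕ :=
  (Finset.range (d + 1)).filter (fun j => v j ≠ w j)

/-- Hyperorthogonality: for every `n ∈ {0,…,d−2}`, every `2^n` consecutive
edges of the curve have exactly `n+1` distinct axes. -/
def Hyperorthogonal (d : ℕ) (c : List Pt) : Prop :=
  ∀ n, n ≤ d - 2 → ∀ s, s + 2 ^ n + 1 ≤ c.length →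
    ((Finset.range (2 ^ n)).biUnion
      (fun t => axesOfEdge d (c.getD (s + t) ptZero) (c.getD (s + t + 1) ptZero))).card = n + 1

/-- The depth of a direction `a` in a signed permutation `σ`:
`0` if `|a| ∈ {|σ(d)|,|σ(d−1)|}`, and otherwise the number `j` with `|σ(d−1−j)| = |a|`. -/
def depth (d : ℕ) (σ : SignedPerm d) (a : ℤ) : ℕ :=
  if (σ.inv a).natAbs = d ∨ (σ.inv a).natAbs = d - 1 then 0 else d - 1 - (σ.inv a).natAbs

/-- The (signed) direction of the edge from `v` to `w`
(for a grid edge with axis `j` this is `±j`). -/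
def dirOf (d : ℕ) (v w : Pt) : ℤ :=
  ∑ j ∈ (Finset.range (d + 1)).filter (fun j => v j ≠ w j), (j : ℤ) * (w j - v j)

/-- The axis of the edge from `v` to `w`. -/
def axisOf (d : ℕ) (v w : Pt) : ℕ := (dirOf d v w).natAbs

/-! ## Extended curves -/

/-- For the extended curve with entry-edge direction `en`, vertex list `c` and
exit-edge direction `ex`, the axis of its `t`-th edge, where the entry edge has
index `0`, the internal edges have indices `1,…,c.length − 1` (edge `t` joins
`c[t−1]` and `c[t]`) and the exit edge has index `c.length`. -/
def axE (d : ℕ) (en : ℤ) (c : List Pt) (ex : ℤ) (t : ℕ) : ℕ :=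
  if t = 0 then en.natAbs
  else if t = c.length then ex.natAbs
  else axisOf d (c.getD (t - 1) ptZero) (c.getD t ptZero)

/-- The edge distance of the axis `a` to the vertex with index `p` within the
extended curve `(en, c, ex)`: one less than the number of edges of the smallest
contiguous subcurve containing this vertex and an edge with axis `a`. -/
noncomputable def edgedistE (d : ℕ) (en : ℤ) (c : List Pt) (ex : ℤ) (p a : ℕ) : ℕ :=
  sInf {m | ∃ t, t ≤ c.length ∧ axE d en c ex t = a ∧
    m = if t ≤ p then p - t else t - p - 1}

/-- Hyperorthogonality of an extended curve: every `2^n` consecutive edges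
(including the entry and exit edges) have exactly `n+1` distinct axes, for all
`n ∈ {0,…,d−2}`. -/
def HyperorthogonalE (d : ℕ) (en : ℤ) (c : List Pt) (ex : ℤ) : Prop :=
  ∀ n, n ≤ d - 2 → ∀ s, s + 2 ^ n ≤ c.length + 1 →
    ((Finset.range (2 ^ n)).image (fun t => axE d en c ex (s + t))).card = n + 1

/-- The sequence of approximating curves determined by a system of signed
permutations `σ k i` (one for each vertex `i` of the `k`-th curve):
`A_0` is the single vertex at the origin and `A_{k+1}` is obtained from `A_k` by
inflation, vertex `i` being replaced by the 1-curve `σ_{k,i}(G(d))`. -/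
def buildCurve (d : ℕ) (σ : ℕ → ℕ → SignedPerm d) : ℕ → List Pt
  | 0 => [ptZero]
  | k + 1 =>
    ((List.range (buildCurve d σ k).length).map
      (fun i => grayPiece d (σ k i) ((buildCurve d σ k).getD i ptZero))).flatten

/-- `f : [0,1] → [0,1]^d` is the space-filling curve approximated by the curves
`A k`: the `i`-th vertex of `A k` corresponds to the cube `2^{−k}(v_{k,i} + [0,1]^d)`,
and `f` maps `[i/2^{dk},(i+1)/2^{dk}]` into that cube. -/
def Approximates (d : ℕ) (A : ℕ → List Pt) (f : ℝ → Fin d → ℝ) : Prop :=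
  ∀ k i, i < (A k).length → ∀ t : ℝ,
    (i : ℝ) / 2 ^ (d * k) ≤ t → t ≤ ((i : ℝ) + 1) / 2 ^ (d * k) →
    ∀ j : Fin d,
      ((((A k).getD i ptZero) ((j : ℕ) + 1) : ℝ) / 2 ^ k ≤ f t j ∧
        f t j ≤ ((((A k).getD i ptZero) ((j : ℕ) + 1) : ℝ) + 1) / 2 ^ k)

/-- The smallest axis-aligned box containing a (nonempty, bounded) set `S ⊆ ℝ^d`. -/
noncomputable def bbox (d : ℕ) (S : Set (Fin d → ℝ)) : Set (Fin d → ℝ) :=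
  Set.univ.pi fun j => Set.Icc (sInf ((fun p => p j) '' S)) (sSup ((fun p => p j) '' S))

/-! ## General inflation (arbitrary 1-curves), isometric copies, self-similarity -/

/-- `c` is a 1-curve on the translated unit cube `2·base + {0,1}^d`. -/
def IsUnitCurveAt (d : ℕ) (base : Pt) (c : List Pt) : Prop :=
  IsGridCurve d c ∧
    ∀ v : Pt, v ∈ c ↔
      ((∀ j, 1 ≤ j → j ≤ d → v j = 2 * base j ∨ v j = 2 * base j + 1) ∧
        ∀ j, j = 0 ∨ d < j → v j = 2 * base j)

/-- `B` is obtained from `A` by (general) inflation: each vertex `v_i` of `A` is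
replaced by a 1-curve on `2·v_i + {0,1}^d`, and each edge of `A` with direction `e_i`
is replaced by an edge of the same direction connecting consecutive 1-curves. -/
def IsInflation (d : ℕ) (A B : List Pt) : Prop :=
  ∃ C : ℕ → List Pt,
    B = ((List.range A.length).map C).flatten ∧
    IsGridCurve d B ∧
    (∀ i, i < A.length → IsUnitCurveAt d (A.getD i ptZero) (C i)) ∧
    (∀ i, i + 1 < A.length → ∀ e : ℤ,
      HasDir d (A.getD i ptZero) (A.getD (i + 1) ptZero) e →
      HasDir d ((C i).getLastD ptZero) ((C (i + 1)).headD ptZero) e)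

/-- `InflationChain d k X`: `X` is constructed from a single vertex by `k` steps
of inflation. -/
inductive InflationChain (d : ℕ) : ℕ → List Pt → Prop
  | base (v : Pt) : InflationChain d 0 [v]
  | step {k : ℕ} {A B : List Pt} :
      InflationChain d k A → IsInflation d A B → InflationChain d (k + 1) B

/-- The hyperoctahedral symmetry of the cube `{0,…,M}^d` given by the signed
permutation `σ`: the coordinate `|σ⁻¹(j)|` of the argument is sent to coordinate `j`,
reflected (`x ↦ M − x`) whenever `σ⁻¹(j) < 0`. -/
def applySP (d : ℕ) (M : ℤ) (σ : SignedPerm d) (x : Pt) : Pt :=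
  fun j =>
    if 1 ≤ j ∧ j ≤ d then
      if 0 ≤ σ.inv (j : ℤ) then x (σ.inv (j : ℤ)).natAbs
      else M - x (σ.inv (j : ℤ)).natAbs
    else x j

/-- `B` is an isometric copy of the curve `A` (living in a cube `{0,…,M}^d`):
a hyperoctahedral symmetry, possibly composed with reversal, followed by a translation. -/
def IsometricCopy (d : ℕ) (M : ℤ) (A B : List Pt) : Prop :=
  ∃ σ : SignedPerm d, ∃ rev : Bool, ∃ tr : Pt,
    B = (if rev then A.reverse else A).map (fun v => fun j => applySP d M σ v j + tr j)

/-- Self-similarity of one approximation step: `B` is the concatenation of `2^d`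
isometric copies of the `k`-curve `A`, connected by single edges. -/
def SelfSimilarStep (d k : ℕ) (A B : List Pt) : Prop :=
  ∃ parts : ℕ → List Pt,
    B = ((List.range (2 ^ d)).map parts).flatten ∧
    IsGridCurve d B ∧
    ∀ m, m < 2 ^ d → IsometricCopy d ((2 : ℤ) ^ k - 1) A (parts m)

/-- Coordinate `a ∈ {1,…,d}` of a point of `ℝ^d`. -/
noncomputable def coordR (d : ℕ) (x : Fin d → ℝ) (a : ℕ) : ℝ :=
  if h : a - 1 < d then x ⟨a - 1, h⟩ else 0

/-- The hyperoctahedral symmetry of the unit cube `[0,1]^d` given by the signed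
permutation `σ`. -/
noncomputable def applySPR (d : ℕ) (σ : SignedPerm d) (x : Fin d → ℝ) : Fin d → ℝ :=
  fun j =>
    if 0 ≤ σ.inv ((j : ℕ) + 1 : ℤ) then coordR d x (σ.inv ((j : ℕ) + 1 : ℤ)).natAbs
    else 1 - coordR d x (σ.inv ((j : ℕ) + 1 : ℤ)).natAbs

/-- `f` is a self-similar hyperorthogonal well-folded space-filling curve:
it is approximated by a sequence of `k`-curves, starting from a single vertex,
in which each curve is obtained from the previous one by well-folded inflation,
all approximating curves are hyperorthogonal, and each approximating curve is the
concatenation of `2^d` isometric copies of the previous one. -/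
def SSHOWFcurve (d : ℕ) (f : ℝ → Fin d → ℝ) : Prop :=
  ∃ A : ℕ → List Pt,
    A 0 = [ptZero] ∧
    (∀ k, IsInflationWF d (A k) (A (k + 1))) ∧
    (∀ k, IsKCurve d k (A k)) ∧
    (∀ k, Hyperorthogonal d (A k)) ∧
    (∀ k, SelfSimilarStep d k (A k) (A (k + 1))) ∧
    Approximates d A f

/-- Two space-filling curves are the same up to hyperoctahedral symmetry and
reversal. -/
def curveEquiv (d : ℕ) (f g : ℝ → Fin d → ℝ) : Prop :=
  ∃ τ : SignedPerm d,
    (∀ t ∈ Set.Icc (0 : ℝ) 1, g t = applySPR d τ (f t)) ∨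
    (∀ t ∈ Set.Icc (0 : ℝ) 1, g t = applySPR d τ (f (1 - t)))

/-- The direction of the entry edge of the extended child curve `C'_m` within the
inflation of the extended curve `(e0, A, e1)`. -/
def childEntryDir (d : ℕ) (A : List Pt) (e0 : ℤ) (m : ℕ) : ℤ :=
  if m = 0 then e0 else dirOf d (A.getD (m - 1) ptZero) (A.getD m ptZero)

/-- The direction of the exit edge of the extended child curve `C'_m` within the
inflation of the extended curve `(e0, A, e1)`. -/
def childExitDir (d : ℕ) (A : List Pt) (e1 : ℤ) (m : ℕ) : ℤ :=
  if m + 1 = A.length then e1 else dirOf d (A.getD m ptZero) (A.getD (m + 1) ptZero)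

/-- The local edge distance of the axis `a` to the vertex with index `i` within the
extended approximating curve `A'_k` (entry direction `e0`, exit direction `e1`)
of the system `σ`: the edge distance within the extended child curve of `A'_{k-1}`
containing this vertex. -/
noncomputable def led (d : ℕ) (σ : ℕ → ℕ → SignedPerm d) (e0 e1 : ℤ) :
    ℕ → ℕ → ℕ → ℕ
  | 0, _, a => edgedistE d e0 (buildCurve d σ 0) e1 0 a
  | k + 1, i, a =>
    edgedistE d (childEntryDir d (buildCurve d σ k) e0 (i / 2 ^ d))
      (grayPiece d (σ k (i / 2 ^ d)) ((buildCurve d σ k).getD (i / 2 ^ d) ptZero))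
      (childExitDir d (buildCurve d σ k) e1 (i / 2 ^ d))
      (i % 2 ^ d) a

/-- The system of permutations `σ` describes a sequence of extended hyperorthogonal
well-folded approximating curves with entry direction `e0` and exit direction `e1`,
in which the signs of `σ_{k,1}⁻¹` are prescribed by `s`, and the elements of every
unsigned permutation `|σ_{k,i}|` are sorted by decreasing local edge distance. -/
def GoodSystem (d : ℕ) (e0 e1 : ℤ) (s : ℕ → ℕ → ℤ) (σ : ℕ → ℕ → SignedPerm d) : Prop :=
  (∀ k, IsKCurve d k (buildCurve d σ k)) ∧
  (∀ k, HyperorthogonalE d e0 (buildCurve d σ k) e1) ∧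
  (∀ k, ¬ InCube d k (move ((buildCurve d σ k).headD ptZero) (-e0))) ∧
  (∀ k, ¬ InCube d k (move ((buildCurve d σ k).getLastD ptZero) e1)) ∧
  (∀ k j, 1 ≤ j → j ≤ d → Int.sign ((σ k 0).inv (j : ℤ)) = s k j) ∧
  (∀ k i, i < (buildCurve d σ k).length →
    ∀ p q : ℕ, 1 ≤ p → p ≤ q → q ≤ d →
      led d σ e0 e1 k i (((σ k i).f (q : ℤ)).natAbs) ≤
        led d σ e0 e1 k i (((σ k i).f (p : ℤ)).natAbs))

/-- The Butz-Moore generalization of the Hilbert curve, described by the conditions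
on its system of signed permutations: `|σ_{k,i}(d)| = 1` for the first and last
subcube, `|σ_{k,i}(d)| = max(|e_{k,i−1}|,|e_{k,i}|)` in between, all unsigned
permutations are cyclic rotations, and the entry is at the origin. -/
def ButzMoore (d : ℕ) (σ : ℕ → ℕ → SignedPerm d) : Prop :=
  (∀ k, IsKCurve d k (buildCurve d σ k)) ∧
  (∀ k i, i < 2 ^ (d * k) → (i = 0 ∨ i = 2 ^ (d * k) - 1) →
    ((σ k i).f (d : ℤ)).natAbs = 1) ∧
  (∀ k i, 0 < i → i + 1 < 2 ^ (d * k) →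
    ((σ k i).f (d : ℤ)).natAbs =
      max (dirOf d ((buildCurve d σ k).getD (i - 1) ptZero)
            ((buildCurve d σ k).getD i ptZero)).natAbs
          (dirOf d ((buildCurve d σ k).getD i ptZero)
            ((buildCurve d σ k).getD (i + 1) ptZero)).natAbs) ∧
  (∀ k i j, 1 ≤ j → j ≤ d →
    ((σ k i).f (j : ℤ)).natAbs = ((((σ k i).f (d : ℤ)).natAbs + j - 1) % d) + 1) ∧
  (∀ k j, 1 ≤ j → j ≤ d → 0 ≤ (σ k 0).inv (j : ℤ))

/-! ## Generalized curves (diagonal edges allowed) -/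

/-- A generalized edge: `w ≠ v` and every coordinate changes by at most 1. -/
def IsGenEdge (d : ℕ) (v w : Pt) : Prop :=
  v ≠ w ∧ (∀ j, 1 ≤ j → j ≤ d → |w j - v j| ≤ 1) ∧ ∀ j, j = 0 ∨ d < j → w j = v j

/-- A generalized curve on the grid (diagonal edges allowed). -/
def IsGenCurve (d : ℕ) (c : List Pt) : Prop := c.Nodup ∧ c.Chain' (IsGenEdge d)

/-- Generalized inflation: vertices are replaced by 1-curves on the corresponding
subcubes, consecutive 1-curves being joined by a single (possibly diagonal) edge. -/
def IsGenInflation (d : ℕ) (A B : List Pt) : Prop :=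
  ∃ C : ℕ → List Pt,
    B = ((List.range A.length).map C).flatten ∧
    IsGenCurve d B ∧
    (∀ i, i < A.length → IsUnitCurveAt d (A.getD i ptZero) (C i))

/-!
Let `rank σ b = |σ⁻¹ b|`, so that `depth σ b = d - 1 - rank σ b` with truncated subtraction.
For `n < d`, the first and the last `2 ^ n - 1` edges of `G d` use exactly the axes `1, …, n`,
and so do already its first and its last `2 ^ (n - 1)` edges; in `σ (G d)` this axis set becomes
`{|σ 1|, …, |σ n|} = {b | rank σ b ≤ n}`.

In the inflated curve, a window of `2 ^ n ≤ 2 ^ (d - 2)` consecutive edges around the junction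
edge between the 1-curves `σ_j (G d)` and `σ_{j+1} (G d)` carries exactly `n + 1` axes. Hence
the junction axis has rank `≥ d - 1` in both `σ_j` and `σ_{j+1}`, and an axis of rank `n` in one
of them has rank `≤ n + 1` in the other. So `j ↦ depth (σ_j, a)` changes by at most one per
step, and it vanishes at both ends of an edge of `A_k` with axis `a`: each 1-curve stays in its
subcube, so the junction edge replacing that edge has axis `a` too.
-/

lemma subset_of_card_insert_union {α : Type*} [DecidableEq α] {S T : Finset α} {a : α}
    (haS : a ∉ S) (haT : a ∉ T) (h : (insert a (S ∪ T)).card = S.card + 1) : T ⊆ S := by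
  have hins : insert a S = insert a (S ∪ T) :=
    Finset.eq_of_subset_of_card_le (Finset.insert_subset_insert _ Finset.subset_union_left)
      (by rw [h, Finset.card_insert_of_notMem haS])
  intro x hx
  have : x ∈ insert a S := hins ▸ Finset.mem_insert_of_mem (Finset.mem_union_right _ hx)
  exact (Finset.mem_insert.1 this).resolve_left fun h => haT (h ▸ hx)

lemma le_add_sub_of_forall_le_succ_add_one {f : ℕ → ℕ} {i n : ℕ}
    (h : ∀ j, i ≤ j → j < n → f j ≤ f (j + 1) + 1) (hin : i ≤ n) : f i ≤ f n + (n - i) := by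
  induction n, hin using Nat.le_induction with
  | base => simp
  | succ n hin ih =>
    have := h n hin (Nat.lt_succ_self n)
    have := ih fun j hij hjn => h j hij (by omega)
    omega

lemma le_add_sub_of_forall_succ_le_add_one {f : ℕ → ℕ} {i n : ℕ}
    (h : ∀ j, i ≤ j → j < n → f (j + 1) ≤ f j + 1) (hin : i ≤ n) : f n ≤ f i + (n - i) := by
  induction n, hin using Nat.le_induction with
  | base => simp
  | succ n hin ih =>
    have := h n hin (Nat.lt_succ_self n)
    have := ih fun j hij hjn => h j hij (by omega)
    omega

section GrayCode

lemma grayRev_length (l : List ℤ) : (grayRev l).length = l.length := by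
  simp [grayRev]

lemma mem_grayRev {l : List ℤ} {e : ℤ} : e ∈ grayRev l ↔ -e ∈ l := by
  simp [grayRev, neg_eq_iff_eq_neg]

lemma G_succ (d : ℕ) : G (d + 1) = G d ++ [(d : ℤ) + 1] ++ grayRev (G d) := rfl

lemma G_length (d : ℕ) : (G d).length = 2 ^ d - 1 := by
  induction d with
  | zero => rfl
  | succ d ih =>
    rw [G_succ]
    simp only [List.length_append, grayRev_length, ih, List.length_singleton, pow_succ]
    have := Nat.one_le_two_pow (n := d)
    omega

lemma natAbs_mem_Icc_of_mem_G {d : ℕ} {e : ℤ} (he : e ∈ G d) : e.natAbs ∈ Finset.Icc 1 d := by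
  induction d generalizing e with
  | zero => simp [G] at he
  | succ d ih =>
    rw [G_succ, List.mem_append, List.mem_append, List.mem_singleton, mem_grayRev] at he
    rw [Finset.mem_Icc]
    rcases he with (he | rfl) | he
    · have := Finset.mem_Icc.1 (ih he); omega
    · omega
    · have := Finset.mem_Icc.1 (ih he); rw [Int.natAbs_neg] at this; omega

lemma isDir_natCast {d b : ℕ} (hb : b ∈ Finset.Icc 1 d) : IsDir d (b : ℤ) := by
  rw [Finset.mem_Icc] at hb
  exact ⟨by omega, by simpa using hb.2⟩

lemma isDir_of_mem_G {d : ℕ} {e : ℤ} (he : e ∈ G d) : IsDir d e := by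
  have := Finset.mem_Icc.1 (natAbs_mem_Icc_of_mem_G he)
  exact ⟨by omega, this.2⟩

lemma grayRev_G_succ (d : ℕ) :
    grayRev (G (d + 1)) = G d ++ [-((d : ℤ) + 1)] ++ grayRev (G d) := by
  simp [G_succ, grayRev]

lemma take_G_succ_of_two_pow_le {d t : ℕ} (ht : 2 ^ d ≤ t) :
    (G (d + 1)).take t = G d ++ [(d : ℤ) + 1] ++ grayRev ((G d).drop (2 ^ (d + 1) - 1 - t)) := by
  have hlen := G_length d
  have h1 := Nat.one_le_two_pow (n := d)
  have : t = (G d ++ [(d : ℤ) + 1]).length + (t - 2 ^ d) := by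
    rw [List.length_append, hlen, List.length_singleton]; omega
  rw [G_succ, this, List.take_length_add_append, grayRev, grayRev, List.take_reverse,
    List.length_map, ← List.map_drop, hlen, pow_succ]
  congr 4
  omega

lemma take_G {n d : ℕ} (h : n ≤ d) : (G d).take (2 ^ n - 1) = G n := by
  induction d with
  | zero =>
    obtain rfl : n = 0 := by omega
    rfl
  | succ d ih =>
    rcases h.lt_or_eq with h | rfl
    · have hlen : 2 ^ n - 1 ≤ (G d).length := by
        rw [G_length]; have := Nat.pow_le_pow_right two_pos (Nat.lt_succ_iff.1 h); omega
      rw [G_succ, List.append_assoc, List.take_append_of_le_length hlen, ih (by omega)]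
    · exact List.take_of_length_le (G_length _).le

lemma drop_G {n d : ℕ} (h : n < d) : (G d).drop (2 ^ d - 2 ^ n) = grayRev (G n) := by
  induction d with
  | zero => omega
  | succ d ih =>
    have hlen : (G d ++ [(d : ℤ) + 1]).length = 2 ^ d := by
      rw [List.length_append, G_length, List.length_singleton]
      have := Nat.one_le_two_pow (n := d); omega
    rw [G_succ, List.append_assoc, ← List.append_assoc (G d)]
    rcases (Nat.lt_succ_iff.1 h).lt_or_eq with h | rfl
    · have hn : 2 ^ n ≤ 2 ^ d := Nat.pow_le_pow_right two_pos h.le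
      rw [show 2 ^ (d + 1) - 2 ^ n = (G d ++ [(d : ℤ) + 1]).length + (2 ^ d - 2 ^ n) by
        rw [hlen, pow_succ]; omega, List.drop_length_add_append, grayRev, List.drop_reverse,
        List.length_map, G_length, ← List.map_take,
        show 2 ^ d - 1 - (2 ^ d - 2 ^ n) = 2 ^ n - 1 by have := Nat.one_le_two_pow (n := n); omega,
        take_G h.le, grayRev]
    · rw [show 2 ^ (n + 1) - 2 ^ n = (G n ++ [(n : ℤ) + 1]).length by rw [hlen, pow_succ]; omega,
        List.drop_left]

lemma take_G_two_pow {n d : ℕ} (h : n < d) : (G d).take (2 ^ n) = G n ++ [(n : ℤ) + 1] := by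
  have hlen : (G n ++ [(n : ℤ) + 1]).length = 2 ^ n := by
    rw [List.length_append, G_length, List.length_singleton]
    have := Nat.one_le_two_pow (n := n); omega
  have hle : 2 ^ n ≤ 2 ^ (n + 1) - 1 := by
    rw [pow_succ]; have := Nat.one_le_two_pow (n := n); omega
  rw [← Nat.min_eq_left hle, ← List.take_take, take_G h, G_succ, List.append_assoc,
    ← List.append_assoc, ← hlen, List.take_left]

lemma drop_G_sub_one_sub_two_pow {n d : ℕ} (h : n + 1 < d) :
    (G d).drop (2 ^ d - 1 - 2 ^ n) = -((n : ℤ) + 1) :: grayRev (G n) := by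
  have hn : 2 ^ (n + 1) ≤ 2 ^ d := Nat.pow_le_pow_right two_pos h.le
  have hsplit : 2 ^ d - 1 - 2 ^ n = 2 ^ d - 2 ^ (n + 1) + (G n).length := by
    rw [G_length, pow_succ] at *; have := Nat.one_le_two_pow (n := n); omega
  rw [hsplit, ← List.drop_drop, drop_G h, grayRev_G_succ, List.append_assoc, List.drop_left]
  rfl

def axisSet (l : List ℤ) : Finset ℕ := l.toFinset.image Int.natAbs

lemma axisSet_append (l₁ l₂ : List ℤ) : axisSet (l₁ ++ l₂) = axisSet l₁ ∪ axisSet l₂ := by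
  simp [axisSet, List.toFinset_append, Finset.image_union]

lemma axisSet_cons (e : ℤ) (l : List ℤ) : axisSet (e :: l) = insert e.natAbs (axisSet l) := by
  simp [axisSet]

lemma axisSet_grayRev (l : List ℤ) : axisSet (grayRev l) = axisSet l := by
  ext m
  simp only [axisSet, Finset.mem_image, List.mem_toFinset, mem_grayRev]
  exact ⟨fun ⟨e, he, hm⟩ => ⟨-e, he, by simpa using hm⟩,
    fun ⟨e, he, hm⟩ => ⟨-e, by simpa using he, by simpa using hm⟩⟩

lemma axisSet_G (d : ℕ) : axisSet (G d) = Finset.Icc 1 d := by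
  induction d with
  | zero => rfl
  | succ d ih =>
    rw [G_succ, axisSet_append, axisSet_append, axisSet_grayRev, ih]
    ext m
    simp only [axisSet, List.toFinset_cons, List.toFinset_nil, insert_empty_eq,
      Finset.image_singleton, Finset.union_singleton, Finset.insert_union, Finset.union_idempotent,
      Finset.mem_insert, Finset.mem_Icc]
    omega

/-- The axes of the edges `lo, …, hi - 1` of `G d`. -/
def grayAxes (d lo hi : ℕ) : Finset ℕ := axisSet (((G d).drop lo).take (hi - lo))

lemma grayAxes_zero_two_pow_sub_one {n d : ℕ} (h : n ≤ d) :
    grayAxes d 0 (2 ^ n - 1) = Finset.Icc 1 n := by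
  rw [grayAxes, List.drop_zero, Nat.sub_zero, take_G h, axisSet_G]

lemma grayAxes_zero_two_pow {n d : ℕ} (h : n < d) :
    grayAxes d 0 (2 ^ n) = Finset.Icc 1 (n + 1) := by
  rw [grayAxes, List.drop_zero, Nat.sub_zero, take_G_two_pow h, axisSet_append, axisSet_G]
  ext m
  simp only [axisSet, List.toFinset_cons, List.toFinset_nil, insert_empty_eq,
    Finset.image_singleton, Finset.union_singleton, Finset.mem_insert, Finset.mem_Icc]
  omega

lemma take_drop_G_eq_drop {lo d : ℕ} :
    ((G d).drop lo).take (2 ^ d - 1 - lo) = (G d).drop lo :=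
  List.take_of_length_le (by simp [G_length])

lemma grayAxes_two_pow_sub_two_pow {n d : ℕ} (h : n < d) :
    grayAxes d (2 ^ d - 2 ^ n) (2 ^ d - 1) = Finset.Icc 1 n := by
  rw [grayAxes, take_drop_G_eq_drop, drop_G h, axisSet_grayRev, axisSet_G]

lemma grayAxes_two_pow_sub_one_sub_two_pow {n d : ℕ} (h : n + 1 < d) :
    grayAxes d (2 ^ d - 1 - 2 ^ n) (2 ^ d - 1) = Finset.Icc 1 (n + 1) := by
  rw [grayAxes, take_drop_G_eq_drop, drop_G_sub_one_sub_two_pow h, axisSet_cons,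
    axisSet_grayRev, axisSet_G]
  ext m
  simp only [Finset.mem_insert, Finset.mem_Icc]
  omega

end GrayCode

namespace SignedPerm

variable {d : ℕ} (σ : SignedPerm d)

lemma natAbs_f_natAbs (g : ℤ) : (σ.f g.natAbs).natAbs = (σ.f g).natAbs := by
  rcases Int.natAbs_eq g with h | h
  · rw [← h]
  · rw [show (g.natAbs : ℤ) = -g by omega, σ.neg, Int.natAbs_neg]

lemma natAbs_f_eq_iff {g : ℤ} (hg : IsDir d g) {c : ℕ} (hc : c ∈ Finset.Icc 1 d) :
    (σ.f g).natAbs = c ↔ g = σ.inv c ∨ g = -σ.inv c := by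
  have hdc := isDir_natCast hc
  constructor
  · intro h
    rcases Int.natAbs_eq_iff.1 h with h | h
    · exact .inl (by rw [← h, σ.left_inv _ hg])
    · exact .inr (by rw [← σ.neg_inv, ← h, σ.left_inv _ hg])
  · rintro (rfl | rfl)
    · simp [σ.right_inv _ hdc]
    · simp [σ.neg, σ.right_inv _ hdc]

lemma natAbs_inv_mem_Icc {c : ℕ} (hc : c ∈ Finset.Icc 1 d) :
    (σ.inv c).natAbs ∈ Finset.Icc 1 d := by
  obtain ⟨h0, hd⟩ := σ.maps_inv _ (isDir_natCast hc)
  exact Finset.mem_Icc.2 ⟨by omega, hd⟩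

def firstAxes (n : ℕ) : Finset ℕ := (Finset.Icc 1 n).image fun b : ℕ => (σ.f b).natAbs

lemma firstAxes_mono {m n : ℕ} (h : m ≤ n) : σ.firstAxes m ⊆ σ.firstAxes n :=
  Finset.image_subset_image (Finset.Icc_subset_Icc_right h)

lemma card_firstAxes {n : ℕ} (h : n ≤ d) : (σ.firstAxes n).card = n := by
  rw [firstAxes, Finset.card_image_of_injOn, Nat.card_Icc, Nat.add_sub_cancel]
  intro b hb b' hb' hbb'
  have hb := isDir_natCast (Finset.Icc_subset_Icc_right h hb)
  have hb' := isDir_natCast (Finset.Icc_subset_Icc_right h hb')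
  rcases Int.natAbs_eq_natAbs_iff.1 hbb' with e | e
  · simpa [σ.left_inv _ hb, σ.left_inv _ hb'] using congrArg σ.inv e
  · rw [← σ.neg] at e
    have := congrArg σ.inv e
    rw [σ.left_inv _ hb, σ.left_inv _ ⟨by simpa using hb'.1, by simpa using hb'.2⟩] at this
    omega

lemma mem_firstAxes {n c : ℕ} (hn : n ≤ d) (hc : c ∈ Finset.Icc 1 d) :
    c ∈ σ.firstAxes n ↔ (σ.inv c).natAbs ≤ n := by
  have hinv := Finset.mem_Icc.1 (σ.natAbs_inv_mem_Icc hc)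
  rw [firstAxes, Finset.mem_image]
  constructor
  · rintro ⟨b, hb, hbc⟩
    have hb' := Finset.mem_Icc.1 hb
    rcases (σ.natAbs_f_eq_iff (isDir_natCast (Finset.Icc_subset_Icc_right hn hb)) hc).1 hbc
      with h | h <;> omega
  · intro h
    exact ⟨_, Finset.mem_Icc.2 ⟨hinv.1, h⟩,
      (σ.natAbs_f_natAbs _).trans (by simp [σ.right_inv _ (isDir_natCast hc)])⟩

end SignedPerm

lemma depth_eq (d : ℕ) (σ : SignedPerm d) (a : ℤ) : depth d σ a = d - 1 - (σ.inv a).natAbs := by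
  unfold depth
  split_ifs <;> omega

section Displacement

/-- The total displacement along axis `m` of a path with edge directions `l`. -/
def axisDisp (m : ℕ) (l : List ℤ) : ℤ := (l.map fun e => if e.natAbs = m then e.sign else 0).sum

lemma axisDisp_append (m : ℕ) (l₁ l₂ : List ℤ) :
    axisDisp m (l₁ ++ l₂) = axisDisp m l₁ + axisDisp m l₂ := by
  simp [axisDisp]

lemma axisDisp_grayRev (m : ℕ) (l : List ℤ) : axisDisp m (grayRev l) = -axisDisp m l := by
  induction l with
  | nil => rfl
  | cons e l ih =>
    simp only [grayRev, List.map_cons, List.reverse_cons] at ih ⊢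
    rw [axisDisp_append, ih]
    simp only [axisDisp, List.map_cons, List.map_nil, List.sum_cons, List.sum_nil,
      Int.natAbs_neg, Int.sign_neg]
    split_ifs <;> ring

lemma axisDisp_eq_zero {m : ℕ} {l : List ℤ} (h : ∀ e ∈ l, e.natAbs ≠ m) : axisDisp m l = 0 :=
  List.sum_eq_zero fun x hx => by
    obtain ⟨e, he, rfl⟩ := List.mem_map.1 hx
    exact if_neg (h e he)

lemma foldl_move_apply (l : List ℤ) (v : Pt) (m : ℕ) :
    l.foldl move v m = v m + axisDisp m l := by
  induction l generalizing v with
  | nil => simp [axisDisp]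
  | cons e l ih =>
    rw [List.foldl_cons, ih, ← List.singleton_append, axisDisp_append]
    simp only [move, axisDisp, List.map_cons, List.map_nil, List.sum_singleton, eq_comm (a := m)]
    split_ifs <;> ring

lemma axisDisp_G {m : ℕ} (hm : m ≠ 0) (d : ℕ) : axisDisp m (G d) = if m = d then 1 else 0 := by
  induction d with
  | zero => simp [G, axisDisp, hm]
  | succ d ih =>
    rw [G_succ, axisDisp_append, axisDisp_append, axisDisp_grayRev, ih]
    simp only [axisDisp, List.map_cons, Int.sign_natCast_add_one, List.map_nil, List.sum_cons,
      List.sum_nil, add_zero]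
    split_ifs <;> omega

/-- Along each axis, the Gray code path stays within `{0, 1}`. -/
lemma axisDisp_take_G {m : ℕ} (hm : m ≠ 0) (d t : ℕ) :
    axisDisp m ((G d).take t) = 0 ∨ axisDisp m ((G d).take t) = 1 := by
  induction d generalizing t with
  | zero => simp [G, axisDisp]
  | succ d ih =>
    rcases lt_or_ge t (2 ^ d) with ht | ht
    · rw [G_succ, List.append_assoc, List.take_append_of_le_length (by rw [G_length]; omega)]
      exact ih t
    rw [take_G_succ_of_two_pow_le ht]
    set s := 2 ^ (d + 1) - 1 - t
    have hsplit := axisDisp_append m ((G d).take s) ((G d).drop s)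
    rw [List.take_append_drop, axisDisp_G hm] at hsplit
    have hlast : axisDisp m [(d : ℤ) + 1] = if m = d + 1 then 1 else 0 := by
      simp only [axisDisp, List.map_cons, List.map_nil, List.sum_singleton,
        Int.sign_eq_one_of_pos (by omega : (0 : ℤ) < d + 1)]
      split_ifs <;> omega
    rw [axisDisp_append, axisDisp_append, axisDisp_grayRev, axisDisp_G hm, hlast]
    by_cases hmd : m = d + 1
    · have hzero : axisDisp m ((G d).take s) = 0 := axisDisp_eq_zero fun e he => by
        have := Finset.mem_Icc.1 (natAbs_mem_Icc_of_mem_G (List.mem_of_mem_take he)); omega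
      rw [if_pos hmd]
      rw [if_neg (show m ≠ d by omega)] at hsplit ⊢
      omega
    · rw [if_neg hmd]
      rcases ih s with h | h <;> omega

lemma axisDisp_map_f {d : ℕ} (σ : SignedPerm d) {l : List ℤ} (hl : ∀ e ∈ l, IsDir d e)
    {c : ℕ} (hc : c ∈ Finset.Icc 1 d) :
    axisDisp c (l.map σ.f) = (σ.inv c).sign * axisDisp (σ.inv c).natAbs l := by
  have hu := σ.maps_inv _ (isDir_natCast hc)
  have hc0 : c ≠ 0 := by have := (Finset.mem_Icc.1 hc).1; omega
  have hsq : (σ.inv c).sign * (σ.inv c).sign = 1 := by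
    rcases lt_or_gt_of_ne hu.1 with h | h
    · rw [Int.sign_eq_neg_one_of_neg h]; rfl
    · rw [Int.sign_eq_one_of_pos h]; rfl
  rw [axisDisp, axisDisp, List.map_map, ← List.sum_map_mul_left]
  congr 1
  refine List.map_congr_left fun e he => ?_
  simp only [Function.comp_apply]
  by_cases hec : (σ.f e).natAbs = c
  · rw [if_pos hec]
    rcases (σ.natAbs_f_eq_iff (hl e he) hc).1 hec with rfl | rfl
    · simp [σ.right_inv _ (isDir_natCast hc), Int.sign_natCast_of_ne_zero hc0, hsq]
    · simp [σ.neg, σ.right_inv _ (isDir_natCast hc),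
        Int.sign_natCast_of_ne_zero hc0, hsq]
  · rw [if_neg hec, if_neg, mul_zero]
    intro h
    exact hec ((σ.natAbs_f_eq_iff (hl e he) hc).2 (Int.natAbs_eq_natAbs_iff.1 h))

end Displacement

section Curves

lemma pathVertices_getD (start : Pt) (l : List ℤ) {t : ℕ} (ht : t ≤ l.length) :
    (pathVertices start l).getD t ptZero = (l.take t).foldl move start := by
  rw [pathVertices, List.getD_eq_getElem _ _ (by simp only [List.length_scanl]; omega),
    List.getElem_scanl]

lemma pathVertices_getD_succ (start : Pt) (l : List ℤ) {t : ℕ} (ht : t < l.length) :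
    (pathVertices start l).getD (t + 1) ptZero =
      move ((pathVertices start l).getD t ptZero) (l.getD t 0) := by
  rw [pathVertices, List.getD_eq_getElem _ _ (by simp only [List.length_scanl]; omega),
    List.getD_eq_getElem _ _ (by simp only [List.length_scanl]; omega), List.getD_eq_getElem _ _ ht,
    List.getElem_succ_scanl]

def edgeAxes (d : ℕ) (c : List Pt) (p : ℕ) : Finset ℕ :=
  axesOfEdge d (c.getD p ptZero) (c.getD (p + 1) ptZero)

variable {d : ℕ}

lemma axesOfEdge_move (v : Pt) {e : ℤ} (he : IsDir d e) :
    axesOfEdge d v (move v e) = {e.natAbs} := by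
  have hsign : e.sign ≠ 0 := by simpa using he.1
  ext j
  simp only [axesOfEdge, move, Finset.mem_singleton]
  by_cases hj : j = e.natAbs
  · simp [hj, hsign, Nat.lt_succ_of_le he.2]
  · simp [hj]

lemma exists_edgeAxes_eq_singleton {c : List Pt} (hc : c.IsChain (IsEdge d)) {p : ℕ}
    (hp : p + 1 < c.length) : ∃ α ∈ Finset.Icc 1 d, edgeAxes d c p = {α} := by
  obtain ⟨e, he, hmove⟩ : IsEdge d (c.getD p ptZero) (c.getD (p + 1) ptZero) := by
    rw [List.getD_eq_getElem _ _ (by omega), List.getD_eq_getElem _ _ hp]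
    exact List.isChain_iff_getElem.1 hc p hp
  refine ⟨e.natAbs, Finset.mem_Icc.2 ⟨by have := he.1; omega, he.2⟩, ?_⟩
  rw [edgeAxes, hmove, axesOfEdge_move _ he]

lemma Hyperorthogonal.card_biUnion_edgeAxes {c : List Pt} (h : Hyperorthogonal d c) {n s : ℕ}
    (hn : n ≤ d - 2) (hs : s + 2 ^ n + 1 ≤ c.length) :
    ((Finset.Ico s (s + 2 ^ n)).biUnion (edgeAxes d c)).card = n + 1 := by
  rw [← h n hn s hs]
  congr 1
  ext β
  simp only [Finset.mem_biUnion, Finset.mem_Ico, Finset.mem_range, edgeAxes]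
  constructor
  · rintro ⟨p, ⟨hp1, hp2⟩, hβ⟩
    exact ⟨p - s, by omega, by rwa [Nat.add_sub_cancel' hp1]⟩
  · rintro ⟨t, ht, hβ⟩
    exact ⟨s + t, ⟨by omega, by omega⟩, hβ⟩

end Curves

section Inflation

variable {d : ℕ}

lemma grayPiece_length (σ : SignedPerm d) (v : Pt) : (grayPiece d σ v).length = 2 ^ d := by
  rw [grayPiece, pathVertices, List.length_scanl, List.length_map, G_length]
  have := Nat.one_le_two_pow (n := d)
  omega

lemma grayPiece_getD_apply (σ : SignedPerm d) (v : Pt) {t : ℕ} (ht : t < 2 ^ d) {c : ℕ}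
    (hc : c ∈ Finset.Icc 1 d) :
    (grayPiece d σ v).getD t ptZero c = 2 * v c ∨
      (grayPiece d σ v).getD t ptZero c = 2 * v c + 1 := by
  have hGdir : ∀ e ∈ (G d).take t, IsDir d e := fun e he =>
    isDir_of_mem_G (List.mem_of_mem_take he)
  rw [grayPiece, pathVertices_getD _ _ (by rw [List.length_map, G_length]; omega), foldl_move_apply,
    ← List.map_take, axisDisp_map_f σ hGdir hc, if_pos (Finset.mem_Icc.1 hc)]
  have hu := (σ.maps_inv _ (isDir_natCast hc)).1
  rcases axisDisp_take_G (m := (σ.inv c).natAbs) (by omega) d t with h | h <;>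
    rcases lt_or_gt_of_ne hu with hs | hs <;>
    simp [h, flipped, hs, Int.sign_eq_neg_one_of_neg, Int.sign_eq_one_of_pos, not_lt_of_gt]

def grayInflation (d K : ℕ) (σ : ℕ → SignedPerm d) (v : ℕ → Pt) : List Pt :=
  ((List.range K).map fun i => grayPiece d (σ i) (v i)).flatten

variable {K : ℕ} {σ : ℕ → SignedPerm d} {v : ℕ → Pt}

lemma grayInflation_succ :
    grayInflation d (K + 1) σ v = grayInflation d K σ v ++ grayPiece d (σ K) (v K) := by
  simp [grayInflation, List.range_succ]

lemma length_grayInflation : (grayInflation d K σ v).length = K * 2 ^ d := by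
  induction K with
  | zero => simp [grayInflation]
  | succ K ih => rw [grayInflation_succ, List.length_append, ih, grayPiece_length]; ring

lemma getD_grayInflation {j s : ℕ} (hj : j < K) (hs : s < 2 ^ d) :
    (grayInflation d K σ v).getD (j * 2 ^ d + s) ptZero =
      (grayPiece d (σ j) (v j)).getD s ptZero := by
  induction K with
  | zero => omega
  | succ K ih =>
    rw [grayInflation_succ]
    rcases (Nat.lt_succ_iff.1 hj).lt_or_eq with hj | rfl
    · rw [List.getD_append _ _ _ _ (by rw [length_grayInflation]; nlinarith), ih hj]
    · rw [List.getD_append_right _ _ _ _ (by rw [length_grayInflation]; omega),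
        length_grayInflation, Nat.add_sub_cancel_left]

lemma edgeAxes_grayInflation {j s : ℕ} (hj : j < K) (hs : s + 1 < 2 ^ d) :
    edgeAxes d (grayInflation d K σ v) (j * 2 ^ d + s) = {((σ j).f ((G d).getD s 0)).natAbs} := by
  have hsG : s < (G d).length := by rw [G_length]; omega
  rw [edgeAxes, add_assoc, getD_grayInflation hj (by omega), getD_grayInflation hj hs, grayPiece,
    pathVertices_getD_succ _ _ (by simpa using hsG),
    List.getD_eq_getElem ((G d).map (σ j).f) 0 (by simpa using hsG), List.getElem_map,
    List.getD_eq_getElem _ _ hsG]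
  exact axesOfEdge_move _ ((σ j).maps _ (isDir_of_mem_G (List.getElem_mem _)))

lemma biUnion_edgeAxes_grayInflation {j lo hi : ℕ} (hj : j < K) (hhi : hi ≤ 2 ^ d - 1) :
    (Finset.Ico (j * 2 ^ d + lo) (j * 2 ^ d + hi)).biUnion (edgeAxes d (grayInflation d K σ v)) =
      (grayAxes d lo hi).image fun b : ℕ => ((σ j).f b).natAbs := by
  have hG := G_length d
  ext β
  simp only [Finset.mem_biUnion, Finset.mem_Ico, Finset.mem_image, grayAxes, axisSet,
    List.mem_toFinset, List.mem_iff_getElem, List.getElem_take, List.getElem_drop,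
    List.length_take, List.length_drop]
  constructor
  · rintro ⟨p, ⟨hp1, hp2⟩, hβ⟩
    obtain ⟨s, rfl⟩ : ∃ s, p = j * 2 ^ d + s := ⟨p - j * 2 ^ d, by omega⟩
    rw [edgeAxes_grayInflation hj (by omega), Finset.mem_singleton] at hβ
    refine ⟨_, ⟨_, ⟨s - lo, by omega, rfl⟩, rfl⟩, ?_⟩
    rw [hβ, SignedPerm.natAbs_f_natAbs, List.getD_eq_getElem _ _ (by omega)]
    congr 3
    omega
  · rintro ⟨b, ⟨e, ⟨i, hi, rfl⟩, rfl⟩, rfl⟩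
    refine ⟨j * 2 ^ d + (lo + i), ⟨by omega, by omega⟩, ?_⟩
    rw [edgeAxes_grayInflation hj (by omega), Finset.mem_singleton, SignedPerm.natAbs_f_natAbs,
      List.getD_eq_getElem _ _ (by omega)]

lemma exists_junction_axis (hc : (grayInflation d K σ v).IsChain (IsEdge d)) {j : ℕ}
    (hj : j + 1 < K) :
    ∃ α ∈ Finset.Icc 1 d, edgeAxes d (grayInflation d K σ v) (j * 2 ^ d + (2 ^ d - 1)) = {α} := by
  have hP := Nat.one_le_two_pow (n := d)
  have hK : (j + 2) * 2 ^ d ≤ K * 2 ^ d := Nat.mul_le_mul_right _ hj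
  rw [add_mul] at hK
  exact exists_edgeAxes_eq_singleton hc (by rw [length_grayInflation]; omega)

lemma edgeAxes_grayInflation_junction (hc : (grayInflation d K σ v).IsChain (IsEdge d)) {j : ℕ}
    (hj : j + 1 < K) {e : ℤ} (he : HasDir d (v j) (v (j + 1)) e) :
    edgeAxes d (grayInflation d K σ v) (j * 2 ^ d + (2 ^ d - 1)) = {e.natAbs} := by
  have hP := Nat.one_le_two_pow (n := d)
  have hnext : j * 2 ^ d + (2 ^ d - 1) + 1 = (j + 1) * 2 ^ d + 0 := by rw [add_mul]; omega
  obtain ⟨α, -, hα⟩ := exists_junction_axis hc hj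
  have he0 : e ≠ 0 := he.1.1
  have hea : e.natAbs ∈ Finset.Icc 1 d := Finset.mem_Icc.2 ⟨by omega, he.1.2⟩
  have hmem : e.natAbs ∈ edgeAxes d (grayInflation d K σ v) (j * 2 ^ d + (2 ^ d - 1)) := by
    simp only [edgeAxes, axesOfEdge, Finset.mem_filter, Finset.mem_range]
    refine ⟨Nat.lt_succ_of_le he.1.2, ?_⟩
    rw [hnext, getD_grayInflation (j := j) (s := 2 ^ d - 1) (by omega) (by omega),
      getD_grayInflation (j := j + 1) (s := 0) hj (by omega)]
    have hv : v (j + 1) e.natAbs = v j e.natAbs + e.sign := by rw [he.2]; simp [move]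
    have := grayPiece_getD_apply (σ j) (v j) (t := 2 ^ d - 1) (by omega) hea
    have := grayPiece_getD_apply (σ (j + 1)) (v (j + 1)) (t := 0) (by omega) hea
    rcases lt_or_gt_of_ne he0 with hs | hs
    · rw [Int.sign_eq_neg_one_of_neg hs] at hv; omega
    · rw [Int.sign_eq_one_of_pos hs] at hv; omega
  rw [hα, Finset.mem_singleton] at hmem
  rw [hα, hmem]

/-- A window of `2 ^ n` edges around the junction of the pieces `j` and `j + 1`: the last
`2 ^ d - 1 - lo` edges of piece `j`, the junction edge, and the first `y` edges of piece
`j + 1`. -/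
lemma card_junction_window (hho : Hyperorthogonal d (grayInflation d K σ v)) {j : ℕ}
    (hj : j + 1 < K) {α : ℕ}
    (hα : edgeAxes d (grayInflation d K σ v) (j * 2 ^ d + (2 ^ d - 1)) = {α}) {lo y n : ℕ}
    (hlo : lo ≤ 2 ^ d - 1) (hy : y ≤ 2 ^ d - 1) (hlen : 2 ^ d - 1 - lo + 1 + y = 2 ^ n)
    (hn : n ≤ d - 2) :
    (insert α ((grayAxes d lo (2 ^ d - 1)).image (fun b : ℕ => ((σ j).f b).natAbs) ∪
      (grayAxes d 0 y).image fun b : ℕ => ((σ (j + 1)).f b).natAbs)).card = n + 1 := by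
  have hP := Nat.one_le_two_pow (n := d)
  have hK : (j + 2) * 2 ^ d ≤ K * 2 ^ d := Nat.mul_le_mul_right _ hj
  rw [add_mul] at hK
  have hwin : Finset.Ico (j * 2 ^ d + lo) (j * 2 ^ d + lo + 2 ^ n) =
      Finset.Ico (j * 2 ^ d + lo) (j * 2 ^ d + (2 ^ d - 1)) ∪ {j * 2 ^ d + (2 ^ d - 1)} ∪
        Finset.Ico ((j + 1) * 2 ^ d + 0) ((j + 1) * 2 ^ d + y) := by
    ext p
    simp only [Finset.mem_union, Finset.mem_Ico, Finset.mem_singleton, add_mul, one_mul]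
    omega
  rw [← hho.card_biUnion_edgeAxes (s := j * 2 ^ d + lo) hn (by rw [length_grayInflation]; omega),
    hwin, Finset.union_biUnion, Finset.union_biUnion, Finset.singleton_biUnion, hα,
    biUnion_edgeAxes_grayInflation (by omega) le_rfl, biUnion_edgeAxes_grayInflation hj hy,
    Finset.union_comm _ {α}, Finset.union_assoc, ← Finset.insert_eq]

lemma notMem_firstAxes_of_junction (hho : Hyperorthogonal d (grayInflation d K σ v)) {j : ℕ}
    (hj : j + 1 < K) {α : ℕ}
    (hα : edgeAxes d (grayInflation d K σ v) (j * 2 ^ d + (2 ^ d - 1)) = {α}) (hd : d ≠ 0) :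
    α ∉ (σ j).firstAxes (d - 2) ∧ α ∉ (σ (j + 1)).firstAxes (d - 2) := by
  have h1 := Nat.one_le_two_pow (n := d - 2)
  have h2 : 2 ^ (d - 2) ≤ 2 ^ d := Nat.pow_le_pow_right two_pos (Nat.sub_le d 2)
  have hempty (lo : ℕ) : grayAxes d lo lo = ∅ := by simp [grayAxes, axisSet]
  have hleft := card_junction_window hho hj hα (lo := 2 ^ d - 2 ^ (d - 2)) (y := 0) (by omega)
    (by omega) (by omega) le_rfl
  have hright := card_junction_window hho hj hα (lo := 2 ^ d - 1) (y := 2 ^ (d - 2) - 1) le_rfl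
    (by omega) (by omega) le_rfl
  rw [grayAxes_two_pow_sub_two_pow (by omega), hempty, Finset.image_empty,
    Finset.union_empty, ← SignedPerm.firstAxes] at hleft
  rw [hempty, grayAxes_zero_two_pow_sub_one (Nat.sub_le d 2), Finset.image_empty,
    Finset.empty_union, ← SignedPerm.firstAxes] at hright
  constructor <;> intro hmem
  · rw [Finset.insert_eq_of_mem hmem] at hleft
    have := (σ j).card_firstAxes (Nat.sub_le d 2)
    omega
  · rw [Finset.insert_eq_of_mem hmem] at hright
    have := (σ (j + 1)).card_firstAxes (Nat.sub_le d 2)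
    omega

lemma firstAxes_subset_of_junction (hho : Hyperorthogonal d (grayInflation d K σ v)) {j : ℕ}
    (hj : j + 1 < K) {α : ℕ}
    (hα : edgeAxes d (grayInflation d K σ v) (j * 2 ^ d + (2 ^ d - 1)) = {α}) {n : ℕ}
    (hn : n + 1 ≤ d - 2) :
    (σ (j + 1)).firstAxes n ⊆ (σ j).firstAxes (n + 1) ∧
      (σ j).firstAxes n ⊆ (σ (j + 1)).firstAxes (n + 1) := by
  obtain ⟨hnot, hnot'⟩ := notMem_firstAxes_of_junction hho hj hα (by omega)
  have hnot_le {m : ℕ} (hm : m ≤ d - 2) : α ∉ (σ j).firstAxes m ∧ α ∉ (σ (j + 1)).firstAxes m :=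
    ⟨fun h => hnot ((σ j).firstAxes_mono hm h), fun h => hnot' ((σ (j + 1)).firstAxes_mono hm h)⟩
  have h1 := Nat.one_le_two_pow (n := n)
  have h2 : 2 ^ (n + 1) ≤ 2 ^ d := Nat.pow_le_pow_right two_pos (by omega)
  rw [pow_succ] at h2
  have hleft := card_junction_window hho hj hα (lo := 2 ^ d - 1 - 2 ^ n) (y := 2 ^ n - 1)
    (by omega) (by omega) (by rw [pow_succ]; omega) (n := n + 1) hn
  have hright := card_junction_window hho hj hα (lo := 2 ^ d - 2 ^ n) (y := 2 ^ n)
    (by omega) (by omega) (by rw [pow_succ]; omega) (n := n + 1) hn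
  rw [grayAxes_two_pow_sub_one_sub_two_pow (by omega), grayAxes_zero_two_pow_sub_one (by omega),
    ← SignedPerm.firstAxes, ← SignedPerm.firstAxes] at hleft
  rw [grayAxes_two_pow_sub_two_pow (by omega), grayAxes_zero_two_pow (by omega),
    ← SignedPerm.firstAxes, ← SignedPerm.firstAxes, Finset.union_comm] at hright
  exact ⟨subset_of_card_insert_union (hnot_le hn).1 (hnot_le (by omega)).2
      (by rw [hleft, (σ j).card_firstAxes (by omega)]),
    subset_of_card_insert_union (hnot_le hn).2 (hnot_le (by omega)).1
      (by rw [hright, (σ (j + 1)).card_firstAxes (by omega)])⟩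

lemma depth_eq_zero_of_junction (hho : Hyperorthogonal d (grayInflation d K σ v)) {j : ℕ}
    (hj : j + 1 < K) {α : ℕ} (hα : α ∈ Finset.Icc 1 d)
    (hαB : edgeAxes d (grayInflation d K σ v) (j * 2 ^ d + (2 ^ d - 1)) = {α}) :
    depth d (σ j) α = 0 ∧ depth d (σ (j + 1)) α = 0 := by
  have hd : d ≠ 0 := by have := Finset.mem_Icc.1 hα; omega
  obtain ⟨h, h'⟩ := notMem_firstAxes_of_junction hho hj hαB hd
  rw [(σ j).mem_firstAxes (Nat.sub_le d 2) hα] at h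
  rw [(σ (j + 1)).mem_firstAxes (Nat.sub_le d 2) hα] at h'
  rw [depth_eq, depth_eq]
  omega

lemma depth_le_depth_add_one (hho : Hyperorthogonal d (grayInflation d K σ v)) {j : ℕ}
    (hj : j + 1 < K) (hc : (grayInflation d K σ v).IsChain (IsEdge d)) {b : ℕ}
    (hb : b ∈ Finset.Icc 1 d) :
    depth d (σ j) b ≤ depth d (σ (j + 1)) b + 1 ∧ depth d (σ (j + 1)) b ≤ depth d (σ j) b + 1 := by
  obtain ⟨α, -, hα⟩ := exists_junction_axis hc hj
  have hr := Finset.mem_Icc.1 ((σ j).natAbs_inv_mem_Icc hb)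
  have hr' := Finset.mem_Icc.1 ((σ (j + 1)).natAbs_inv_mem_Icc hb)
  have hstep {τ τ' : SignedPerm d}
      (hsub : ∀ n, n + 1 ≤ d - 2 → τ'.firstAxes n ⊆ τ.firstAxes (n + 1))
      (hn : (τ'.inv b).natAbs + 1 ≤ d - 2) : (τ.inv b).natAbs ≤ (τ'.inv b).natAbs + 1 := by
    rw [← τ.mem_firstAxes (by omega) hb]
    exact hsub _ hn ((τ'.mem_firstAxes (by omega) hb).2 le_rfl)
  have h := hstep (fun n hn => (firstAxes_subset_of_junction hho hj hα hn).1)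
  have h' := hstep (fun n hn => (firstAxes_subset_of_junction hho hj hα hn).2)
  rw [depth_eq, depth_eq]
  omega

end Inflation

theorem depth_le_edgedist_general (d k K : ℕ)
    (v : ℕ → Pt)
    (σ : ℕ → SignedPerm d)
    (B : List Pt)
    (hB : B = ((List.range K).map (fun i => grayPiece d (σ i) (v i))).flatten)
    (hBvalid : IsKCurve d (k + 1) B)
    (hBho : Hyperorthogonal d B) :
    ∀ a : ℤ, 1 ≤ a → a ≤ (d : ℤ) → ∀ i, i < K →
      ∀ l r, l ≤ i → i ≤ r → r < K →
        (∃ t, l ≤ t ∧ t + 1 ≤ r ∧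
          ∃ e : ℤ, HasDir d (v t) (v (t + 1)) e ∧ e.natAbs = a.natAbs) →
        depth d (σ i) a + 1 ≤ r - l := by
  rintro a ha had i - l r hli hir hrK ⟨t, hlt, htr, e, he, hea⟩
  replace hB : B = grayInflation d K σ v := hB
  subst hB
  obtain rfl : a = (e.natAbs : ℤ) := by omega
  have hb : e.natAbs ∈ Finset.Icc 1 d := Finset.mem_Icc.2 ⟨by have := he.1.1; omega, he.1.2⟩
  have hstep j (hj : j + 1 < K) := depth_le_depth_add_one hBho hj hBvalid.1.2 hb
  obtain ⟨ht, ht'⟩ := depth_eq_zero_of_junction hBho (by omega) hb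
    (edgeAxes_grayInflation_junction hBvalid.1.2 (by omega) he)
  rcases le_or_gt i t with hit | hit
  · have := le_add_sub_of_forall_le_succ_add_one (f := fun j => depth d (σ j) e.natAbs)
      (fun j _ hj => (hstep j (by omega)).1) hit
    omega
  · have := le_add_sub_of_forall_succ_le_add_one (f := fun j => depth d (σ j) e.natAbs)
      (i := t + 1) (fun j _ hj => (hstep j (by omega)).2) hit
    omega

/-- in a sequence of well-folded hyperorthogonal curves constructed
by inflation, `depth(σ_{k,i}, a) ≤ edgedist(A_k, v_i, a)` for every axis
`a ∈ {1,…,d}` and every vertex `v_i` of `A_k`.  (Equivalently: for every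
contiguous subcurve of `A_k` spanning vertices `l,…,r` that contains `v_i` and
an edge with axis `a`, we have `depth(σ_i, a) + 1 ≤ r − l`, i.e. the depth is at
most the number of edges of the subcurve minus one.) -/
theorem depth_le_edgedist (d k K : ℕ) (hd : 2 ≤ d) (hK : K = 2 ^ (d * k))
    (v : ℕ → Pt) (A : List Pt) (hA : A = (List.range K).map v)
    (hwf : WellFolded d A) (hkc : IsKCurve d k A) (hho : Hyperorthogonal d A)
    (σ : ℕ → SignedPerm d)
    (B : List Pt)
    (hB : B = ((List.range K).map (fun i => grayPiece d (σ i) (v i))).flatten)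
    (hBvalid : IsKCurve d (k + 1) B) (hBwf : WellFolded d B)
    (hBho : Hyperorthogonal d B) :
    ∀ a : ℤ, 1 ≤ a → a ≤ (d : ℤ) → ∀ i, i < K →
      ∀ l r, l ≤ i → i ≤ r → r < K →
        (∃ t, l ≤ t ∧ t + 1 ≤ r ∧
          ∃ e : ℤ, HasDir d (v t) (v (t + 1)) e ∧ e.natAbs = a.natAbs) →
        depth d (σ i) a + 1 ≤ r - l :=
  depth_le_edgedist_general d k K v σ B hB hBvalid hBho
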